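/- arXiv:1407.5291 — 3 statements merged into one kernel-verified Lean document; each statement's English description precedes it below -/
import Mathlib

section
/- Let s and t be integers with s ≥ 2 and 1 ≤ t ≤ s − 1. There exists a constant C depending only on s such that for every integer z ≥ 1, the sum over all t-tuples (x_1, …, x_t) of positive integers with x_1 + ⋯ + x_t = z of (x_1 ⋯ x_t)^{-1+1/s} is at most C · z^{-1+t/s}. -/
set_option maxHeartbeats 1000000
open Finset Real

lemma sumA' (s : ℕ) (hs : 2 ≤ s) (z : ℕ) :
    ∑ x ∈ Icc 1 z, (x:ℝ) ^ (-1 + 1/(s:ℝ)) ≤ s * (z:ℝ) ^ (1/(s:ℝ)) := by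
  have hs0 : (0:ℝ) < s := by positivity
  set α : ℝ := 1/(s:ℝ) with hα
  have hα0 : 0 < α := by positivity
  have hα1 : α ≤ 1 := by
    rw [hα, div_le_one hs0]; have : (2:ℝ) ≤ s := by exact_mod_cast hs
    linarith
  have key : ∀ n ∈ Icc 1 z, (n:ℝ) ^ (-1 + α) ≤
      (s:ℝ) * ((n:ℝ) ^ α - ((n-1:ℕ):ℝ) ^ α) := by
    intro n hn
    have hn1 : 1 ≤ n := (mem_Icc.mp hn).1
    have hnr : (1:ℝ) ≤ (n:ℝ) := by exact_mod_cast hn1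
    have hnpos : (0:ℝ) < n := by linarith
    have hcast : ((n-1:ℕ):ℝ) = (n:ℝ) - 1 := by
      push_cast [Nat.cast_sub hn1]; ring
    have h1n : 1/(n:ℝ) ≤ 1 := by rw [div_le_one hnpos]; exact hnr
    rw [hcast]
    -- suffices: α * n^(α-1) ≤ n^α - (n-1)^α
    have hber : ((n:ℝ) - 1) ^ α ≤ (n:ℝ) ^ α - α * (n:ℝ) ^ (α - 1) := by
      have h1 : (n:ℝ) - 1 = (n:ℝ) * (1 + (-(1/(n:ℝ)))) := by
        field_simp
        try ring
      rw [h1, Real.mul_rpow (le_of_lt hnpos) (by nlinarith : (0:ℝ) ≤ 1 + (-(1/(n:ℝ))))]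
      have hb : (1 + (-(1/(n:ℝ)))) ^ α ≤ 1 + α * (-(1/(n:ℝ))) :=
        rpow_one_add_le_one_add_mul_self (by nlinarith)
          (le_of_lt hα0) hα1
      have hnα : (0:ℝ) ≤ (n:ℝ) ^ α := rpow_nonneg (le_of_lt hnpos) _
      calc (n:ℝ) ^ α * (1 + (-(1/(n:ℝ)))) ^ α ≤ (n:ℝ) ^ α * (1 + α * (-(1/(n:ℝ)))) :=
            mul_le_mul_of_nonneg_left hb hnα
        _ = (n:ℝ) ^ α - α * ((n:ℝ) ^ α / (n:ℝ)) := by ring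
        _ = (n:ℝ) ^ α - α * (n:ℝ) ^ (α - 1) := by
            rw [Real.rpow_sub hnpos, Real.rpow_one]
    have hsub : (-1 : ℝ) + α = α - 1 := by ring
    rw [hsub]
    have : (s:ℝ) * (α * (n:ℝ) ^ (α - 1)) = (n:ℝ) ^ (α - 1) := by
      rw [hα]; field_simp
    nlinarith [hber]
  calc ∑ x ∈ Icc 1 z, (x:ℝ) ^ (-1 + α)
      ≤ ∑ x ∈ Icc 1 z, (s:ℝ) * ((x:ℝ) ^ α - ((x-1:ℕ):ℝ) ^ α) := sum_le_sum key
    _ = (s:ℝ) * ∑ x ∈ Icc 1 z, (((x:ℕ):ℝ) ^ α - ((x-1:ℕ):ℝ) ^ α) := by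
        rw [mul_sum]
    _ = (s:ℝ) * (z:ℝ) ^ α := by
        congr 1
        clear key
        induction z with
        | zero => simp [Real.zero_rpow (ne_of_gt hα0)]
        | succ m ih =>
          rw [Finset.sum_Icc_succ_top (Nat.one_le_iff_ne_zero.mpr (Nat.succ_ne_zero m)), ih]
          simp

/-- Lemma 1 (i): for `1 ≤ t ≤ s-1`, the sum over tuples of positive integers
`x_1 + ⋯ + x_t = z` of `(x_1 ⋯ x_t)^{-1+1/s}` is `≪ z^{-1+t/s}`, with an implied constant
depending only on `s`. -/
theorem stmt_4 (s : ℕ) (hs : 2 ≤ s) :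
    ∃ C : ℝ, 0 < C ∧ ∀ t : ℕ, 1 ≤ t → t ≤ s - 1 → ∀ z : ℕ, 1 ≤ z →
      ∑ x ∈ (Fintype.piFinset fun _ : Fin t => Finset.Icc 1 z).filter
          (fun x : Fin t → ℕ => ∑ i, x i = z),
        ∏ i, (x i : ℝ) ^ (-1 + 1 / (s : ℝ)) ≤
      C * (z : ℝ) ^ (-1 + (t : ℝ) / s) := by
  have hs0 : (0:ℝ) < s := by positivity
  have hs1 : (2:ℝ) ≤ s := by exact_mod_cast hs
  refine ⟨(s:ℝ) ^ (s + 2), by positivity, ?_⟩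
  intro t ht hts z hz
  haveI : NeZero t := ⟨Nat.one_le_iff_ne_zero.mp ht⟩
  set α : ℝ := 1/(s:ℝ) with hα
  have hα0 : 0 < α := by positivity
  have hα1 : α ≤ 1 := by rw [hα, div_le_one hs0]; linarith
  have hz0 : (0:ℝ) < z := by exact_mod_cast hz
  have hzr : (1:ℝ) ≤ (z:ℝ) := by exact_mod_cast hz
  have ht0 : (0:ℝ) < t := by exact_mod_cast ht
  have htr : (1:ℝ) ≤ (t:ℝ) := by exact_mod_cast ht
  set e : ℝ := -1 + α with he
  have he0 : e ≤ 0 := by rw [he]; linarith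
  set A := (Fintype.piFinset fun _ : Fin t => Finset.Icc 1 z).filter
      (fun x : Fin t → ℕ => ∑ i, x i = z) with hA
  set Sz : ℝ := ∑ x ∈ Icc 1 z, (x:ℝ) ^ e with hSz
  have hSznn : 0 ≤ Sz := sum_nonneg fun x _ => rpow_nonneg (Nat.cast_nonneg _) _
  have hSzb : Sz ≤ (s:ℝ) * (z:ℝ) ^ α := sumA' s hs z
  have hf : ∀ x : Fin t → ℕ, 0 ≤ ∏ i, ((x i:ℕ):ℝ) ^ e :=
    fun x => prod_nonneg fun i _ => rpow_nonneg (Nat.cast_nonneg _) _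
  -- covering
  have hcov : ∀ x ∈ A, ∃ j : Fin t, z ≤ t * x j := by
    intro x hx
    by_contra hcon
    push_neg at hcon
    have hsum : (∑ i, x i) = z := (mem_filter.mp hx).2
    have h1 : ∑ i : Fin t, t * x i < ∑ _i : Fin t, z :=
      Finset.sum_lt_sum_of_nonempty univ_nonempty fun i _ => hcon i
    rw [← Finset.mul_sum, hsum, Finset.sum_const, Finset.card_univ, Fintype.card_fin,
      smul_eq_mul] at h1
    omega
  -- step 2 : split by large coordinate
  have step2 : ∑ x ∈ A, ∏ i, ((x i:ℕ):ℝ) ^ e ≤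
      ∑ j : Fin t, ∑ x ∈ A.filter (fun x => z ≤ t * x j), ∏ i, ((x i:ℕ):ℝ) ^ e := by
    calc ∑ x ∈ A, ∏ i, ((x i:ℕ):ℝ) ^ e
        ≤ ∑ x ∈ A, ∑ j : Fin t, (if z ≤ t * x j then ∏ i, ((x i:ℕ):ℝ) ^ e else 0) := by
          refine sum_le_sum fun x hx => ?_
          obtain ⟨j, hj⟩ := hcov x hx
          have h2 := Finset.single_le_sum
            (f := fun k => if z ≤ t * x k then ∏ i, ((x i:ℕ):ℝ) ^ e else 0)
            (fun k _ => by by_cases h : z ≤ t * x k <;> simp [h, hf x]) (mem_univ j)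
          simpa only [if_pos hj] using h2
      _ = ∑ j : Fin t, ∑ x ∈ A, (if z ≤ t * x j then ∏ i, ((x i:ℕ):ℝ) ^ e else 0) :=
          Finset.sum_comm
      _ = ∑ j : Fin t, ∑ x ∈ A.filter (fun x => z ≤ t * x j), ∏ i, ((x i:ℕ):ℝ) ^ e := by
          exact Finset.sum_congr rfl fun j _ => (Finset.sum_filter _ _).symm
  -- step 3 : bound each piece
  have step3 : ∀ j : Fin t, ∑ x ∈ A.filter (fun x => z ≤ t * x j), ∏ i, ((x i:ℕ):ℝ) ^ e
      ≤ (t:ℝ) * (z:ℝ) ^ e * Sz ^ (t-1) := by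
    intro j
    set proj : (Fin t → ℕ) → (Fin t → ℕ) := fun x i => if i = j then 1 else x i with hproj
    set G : Fin t → Finset ℕ := fun i => if i = j then ({1} : Finset ℕ) else Icc 1 z with hG
    have hpt : ∀ x ∈ A.filter (fun x => z ≤ t * x j),
        ∏ i, ((x i:ℕ):ℝ) ^ e ≤ (t:ℝ) * (z:ℝ) ^ e * ∏ i, ((proj x i:ℕ):ℝ) ^ e := by
      intro x hx
      obtain ⟨hxA, hxj⟩ := mem_filter.mp hx
      have hx1 : ∀ i, 1 ≤ x i := fun i =>
        (mem_Icc.mp ((Fintype.mem_piFinset.mp (mem_filter.mp hxA).1) i)).1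
      have hxj0 : (0:ℝ) < (x j : ℝ) := by exact_mod_cast hx1 j
      have hxj' : (z:ℝ) ≤ (t:ℝ) * (x j:ℝ) := by exact_mod_cast hxj
      have hb : ((x j:ℕ):ℝ) ^ e ≤ (t:ℝ) * (z:ℝ) ^ e := by
        have h1 : ((t:ℝ) * (x j:ℝ)) ^ e ≤ (z:ℝ) ^ e :=
          Real.rpow_le_rpow_of_nonpos hz0 hxj' he0
        have h3 : ((x j:ℕ):ℝ) ^ e = ((t:ℝ) * (x j:ℝ)) ^ e * (t:ℝ) ^ (-e) := by
          rw [Real.mul_rpow ht0.le hxj0.le, mul_comm ((t:ℝ)^e) _, mul_assoc,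
            ← Real.rpow_add ht0]
          simp
        have h4 : (t:ℝ) ^ (-e) ≤ (t:ℝ) := by
          calc (t:ℝ) ^ (-e) ≤ (t:ℝ) ^ (1:ℝ) :=
                Real.rpow_le_rpow_of_exponent_le htr (by rw [he]; linarith)
            _ = (t:ℝ) := Real.rpow_one _
        calc ((x j:ℕ):ℝ) ^ e = ((t:ℝ) * (x j:ℝ)) ^ e * (t:ℝ) ^ (-e) := h3
          _ ≤ (z:ℝ) ^ e * (t:ℝ) :=
              mul_le_mul h1 h4 (rpow_nonneg ht0.le _) (rpow_nonneg hz0.le _)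
          _ = (t:ℝ) * (z:ℝ) ^ e := mul_comm _ _
      rw [← Finset.mul_prod_erase univ (fun i => ((x i:ℕ):ℝ) ^ e) (mem_univ j),
        ← Finset.mul_prod_erase univ (fun i => ((proj x i:ℕ):ℝ) ^ e) (mem_univ j)]
      have hpe : ∏ i ∈ univ.erase j, ((proj x i:ℕ):ℝ) ^ e
          = ∏ i ∈ univ.erase j, ((x i:ℕ):ℝ) ^ e :=
        Finset.prod_congr rfl fun i hi => by
          rw [hproj]; simp [(mem_erase.mp hi).1]
      have hpj : ((proj x j : ℕ):ℝ) = 1 := by simp [hproj]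
      rw [hpj, Real.one_rpow, one_mul, hpe]
      exact mul_le_mul_of_nonneg_right hb
        (prod_nonneg fun i _ => rpow_nonneg (Nat.cast_nonneg _) _)
    have hinj : Set.InjOn proj (A.filter (fun x => z ≤ t * x j)) := by
      intro a ha b hb hab
      have haz : (∑ i, a i) = z := (mem_filter.mp (mem_filter.mp (Finset.mem_coe.mp ha)).1).2
      have hbz : (∑ i, b i) = z := (mem_filter.mp (mem_filter.mp (Finset.mem_coe.mp hb)).1).2
      have hoth : ∀ i, i ≠ j → a i = b i := by
        intro i hij
        have := congrFun hab i
        simpa [hproj, hij] using this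
      funext i
      by_cases hij : i = j
      · subst hij
        have hra : a i + ∑ k ∈ univ.erase i, a k = z := by
          rw [Finset.add_sum_erase univ a (mem_univ i)]; exact haz
        have hrb : b i + ∑ k ∈ univ.erase i, b k = z := by
          rw [Finset.add_sum_erase univ b (mem_univ i)]; exact hbz
        have hrest : ∑ k ∈ univ.erase i, a k = ∑ k ∈ univ.erase i, b k :=
          Finset.sum_congr rfl fun k hk => hoth k (mem_erase.mp hk).1
        omega
      · exact hoth i hij
    have himg : ∀ x ∈ A.filter (fun x => z ≤ t * x j), proj x ∈ Fintype.piFinset G := by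
      intro x hx
      rw [Fintype.mem_piFinset]
      intro i
      by_cases hij : i = j
      · simp [hproj, hG, hij]
      · have : x i ∈ Icc 1 z :=
          (Fintype.mem_piFinset.mp (mem_filter.mp (mem_filter.mp hx).1).1) i
        simpa [hproj, hG, hij] using this
    have himage : ∑ y ∈ (A.filter (fun x => z ≤ t * x j)).image proj,
        (∏ i, ((y i:ℕ):ℝ) ^ e) = ∑ x ∈ A.filter (fun x => z ≤ t * x j),
        (∏ i, ((proj x i:ℕ):ℝ) ^ e) :=
      Finset.sum_image (f := fun y : Fin t → ℕ => ∏ i, ((y i:ℕ):ℝ) ^ e) (g := proj)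
        (fun a ha b hb h => hinj (Finset.mem_coe.mpr ha) (Finset.mem_coe.mpr hb) h)
    calc ∑ x ∈ A.filter (fun x => z ≤ t * x j), ∏ i, ((x i:ℕ):ℝ) ^ e
        ≤ ∑ x ∈ A.filter (fun x => z ≤ t * x j),
            (t:ℝ) * (z:ℝ) ^ e * ∏ i, ((proj x i:ℕ):ℝ) ^ e := sum_le_sum hpt
      _ = (t:ℝ) * (z:ℝ) ^ e *
            ∑ x ∈ A.filter (fun x => z ≤ t * x j), ∏ i, ((proj x i:ℕ):ℝ) ^ e := by
          rw [← Finset.mul_sum]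
      _ ≤ (t:ℝ) * (z:ℝ) ^ e * Sz ^ (t-1) := by
          refine mul_le_mul_of_nonneg_left ?_ (by positivity)
          calc ∑ x ∈ A.filter (fun x => z ≤ t * x j), ∏ i, ((proj x i:ℕ):ℝ) ^ e
              = ∑ y ∈ (A.filter (fun x => z ≤ t * x j)).image proj,
                  ∏ i, ((y i:ℕ):ℝ) ^ e := himage.symm
            _ ≤ ∑ y ∈ Fintype.piFinset G, ∏ i, ((y i:ℕ):ℝ) ^ e := by
                refine Finset.sum_le_sum_of_subset_of_nonneg ?_ fun y _ _ => hf y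
                intro y hy
                obtain ⟨x, hx, rfl⟩ := Finset.mem_image.mp hy
                exact himg x hx
            _ = ∏ i, ∑ v ∈ G i, ((v:ℕ):ℝ) ^ e := by
                rw [Finset.prod_univ_sum]
            _ = Sz ^ (t-1) := by
                rw [← Finset.mul_prod_erase univ (fun i => ∑ v ∈ G i, ((v:ℕ):ℝ) ^ e)
                  (mem_univ j)]
                have h1 : ∑ v ∈ G j, ((v:ℕ):ℝ) ^ e = 1 := by
                  simp [hG]
                have h2 : ∀ i ∈ univ.erase j, (∑ v ∈ G i, ((v:ℕ):ℝ) ^ e) = Sz :=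
                  fun i hi => by simp [hG, (mem_erase.mp hi).1, hSz]
                rw [h1, one_mul, Finset.prod_congr rfl h2, Finset.prod_const]
                congr 1
                rw [Finset.card_erase_of_mem (mem_univ j)]
                simp
  -- combine
  have hcast : ((t-1:ℕ):ℝ) = (t:ℝ) - 1 := by
    push_cast [Nat.cast_sub ht]; ring
  have hzz : (z:ℝ) ^ e * ((z:ℝ) ^ α) ^ (t-1) = (z:ℝ) ^ (-1 + (t:ℝ)/s) := by
    rw [← Real.rpow_natCast ((z:ℝ) ^ α) (t-1), ← Real.rpow_mul hz0.le,
      ← Real.rpow_add hz0]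
    congr 1
    rw [he, hα, hcast]
    field_simp
    try ring
  have hconst : (t:ℝ) * ((t:ℝ) * (s:ℝ)^(t-1)) ≤ (s:ℝ)^(s+2) := by
    have h1 : (t:ℝ) ≤ (s:ℝ) := by
      have : t ≤ s := le_trans hts (Nat.sub_le s 1)
      exact_mod_cast this
    have h2 : (s:ℝ)^(t-1) ≤ (s:ℝ)^s :=
      pow_le_pow_right₀ (by linarith) (le_trans (Nat.sub_le t 1) (le_trans hts (Nat.sub_le s 1)))
    calc (t:ℝ) * ((t:ℝ) * (s:ℝ)^(t-1)) ≤ (s:ℝ) * ((s:ℝ) * (s:ℝ)^s) := by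
          have h4 : (0:ℝ) ≤ (s:ℝ)^(t-1) := by positivity
          have h5 : (t:ℝ)*(s:ℝ)^(t-1) ≤ (s:ℝ)*(s:ℝ)^s :=
            mul_le_mul h1 h2 h4 (by linarith)
          exact mul_le_mul h1 h5 (by positivity) (by linarith)
      _ = (s:ℝ)^(s+2) := by ring
  calc ∑ x ∈ A, ∏ i, ((x i:ℕ):ℝ) ^ e
      ≤ ∑ j : Fin t, ∑ x ∈ A.filter (fun x => z ≤ t * x j), ∏ i, ((x i:ℕ):ℝ) ^ e := step2
    _ ≤ ∑ _j : Fin t, (t:ℝ) * (z:ℝ) ^ e * Sz ^ (t-1) := sum_le_sum fun j _ => step3 j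
    _ = (t:ℝ) * ((t:ℝ) * (z:ℝ) ^ e * Sz ^ (t-1)) := by
        rw [Finset.sum_const, Finset.card_univ, Fintype.card_fin, nsmul_eq_mul]
    _ ≤ (t:ℝ) * ((t:ℝ) * (z:ℝ) ^ e * ((s:ℝ) * (z:ℝ) ^ α) ^ (t-1)) := by
        refine mul_le_mul_of_nonneg_left ?_ ht0.le
        refine mul_le_mul_of_nonneg_left ?_ (by positivity)
        exact pow_le_pow_left₀ hSznn hSzb _
    _ = (t:ℝ) * ((t:ℝ) * (s:ℝ)^(t-1)) * ((z:ℝ) ^ e * ((z:ℝ) ^ α) ^ (t-1)) := by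
        rw [mul_pow]; ring
    _ ≤ (s:ℝ)^(s+2) * ((z:ℝ) ^ e * ((z:ℝ) ^ α) ^ (t-1)) := by
        refine mul_le_mul_of_nonneg_right hconst ?_
        positivity
    _ = (s:ℝ)^(s+2) * (z:ℝ) ^ (-1 + (t:ℝ)/s) := by rw [hzz]
end

section
/- Let s and t be integers with s ≥ 2 and 1 ≤ t ≤ s − 1. There exists a constant C depending only on s such that for every integer z ≥ 2, the sum over all t-tuples (x_1, …, x_t) of positive integers with x_1 + ⋯ + x_t < z of (x_1 ⋯ x_t)^{-1+1/s} · (z − (x_1 + ⋯ + x_t))^{-2t/s} is at most C · z^{-1/s} · log z. -/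
/-!
Write `y = z - (x_1 + ⋯ + x_t)`. Since `x_1 + ⋯ + x_t + y = z`, one of these `t + 1`
numbers is at least `z / (t + 1)`. If it is `y`, then `y^{-2t/s} ≪ z^{-2t/s}` and the sum over
the `x_i` is at most `(∑_{v ≤ z} v^{-1+1/s})^t ≪ z^{t/s}`. If it is some `x_j`, then
`x_j^{-1+1/s} ≪ z^{-1+1/s}`, and replacing `x_j` by `y` (which is injective) reduces the sum to
`(∑_{v ≤ z} v^{-2t/s}) (∑_{v ≤ z} v^{-1+1/s})^{t-1}`; the first factor is
`≪ z^{max(1 - 2t/s, 0)} log z`, since `v^{-2t/s} ≤ v^{-1} z^{max(1 - 2t/s, 0)}`.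
-/

open Finset Real

namespace Real

lemma mul_rpow_sub_one_le_rpow_sub_rpow {p N : ℝ} (hp0 : 0 ≤ p) (hp1 : p ≤ 1) (hN : 1 ≤ N) :
    p * N ^ (p - 1) ≤ N ^ p - (N - 1) ^ p := by
  have hN0 : 0 < N := by linarith
  have hinv : N⁻¹ ≤ 1 := inv_le_one_of_one_le₀ hN
  have bernoulli : (1 + -N⁻¹) ^ p ≤ 1 + p * -N⁻¹ :=
    rpow_one_add_le_one_add_mul_self (by linarith) hp0 hp1
  have hfactor : N - 1 = N * (1 + -N⁻¹) := by field_simp; ring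
  rw [hfactor, mul_rpow hN0.le (by linarith), rpow_sub_one hN0.ne']
  have := mul_le_mul_of_nonneg_left bernoulli (rpow_nonneg hN0.le p)
  have e : N ^ p * (1 + p * -N⁻¹) = N ^ p - p * (N ^ p / N) := by field_simp; ring
  linarith

lemma rpow_le_rpow_max_zero {y z c : ℝ} (hy : 1 ≤ y) (hyz : y ≤ z) : y ^ c ≤ z ^ max c 0 :=
  (rpow_le_rpow_of_exponent_le hy (le_max_left c 0)).trans
    (rpow_le_rpow (by linarith) hyz (le_max_right c 0))

lemma rpow_le_mul_rpow_of_le_mul {x y m c : ℝ} (hy : 0 < y) (hm : 0 < m) (hyx : y ≤ m * x)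
    (hc : c ≤ 0) : x ^ c ≤ m ^ (-c) * y ^ c := by
  have hle : y / m ≤ x := by rwa [div_le_iff₀' hm]
  calc x ^ c ≤ (y / m) ^ c := rpow_le_rpow_of_nonpos (by positivity) hle hc
    _ = m ^ (-c) * y ^ c := by rw [div_rpow hy.le hm.le, rpow_neg hm.le]; ring

lemma mul_rpow_pow {c z r : ℝ} (hz : 0 ≤ z) (n : ℕ) :
    (c * z ^ r) ^ n = c ^ n * z ^ (n * r) := by
  rw [mul_pow, ← rpow_natCast (z ^ r), ← rpow_mul hz, mul_comm r]

end Real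

lemma sum_Icc_rpow_le_rpow_add_one_div {a : ℝ} (ha : -1 < a) (ha0 : a ≤ 0) (z : ℕ) :
    ∑ v ∈ Icc 1 z, (v : ℝ) ^ a ≤ (z : ℝ) ^ (a + 1) / (a + 1) := by
  have hp : 0 < a + 1 := by linarith
  induction z with
  | zero => simp [zero_rpow hp.ne']
  | succ n ih =>
    rw [sum_Icc_succ_top (by omega), le_div_iff₀ hp] at *
    have step := mul_rpow_sub_one_le_rpow_sub_rpow hp.le (by linarith)
      (by linarith [n.cast_nonneg (α := ℝ)] : (1 : ℝ) ≤ n + 1)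
    push_cast at step ⊢
    rw [add_sub_cancel_right, add_sub_cancel_right] at step
    nlinarith

lemma sum_Icc_inv_le_one_add_log (z : ℕ) : ∑ v ∈ Icc 1 z, (v : ℝ)⁻¹ ≤ 1 + log z := by
  simpa [harmonic_eq_sum_Icc] using harmonic_le_one_add_log z

lemma sum_Icc_rpow_le_one_add_log_mul (c : ℝ) (z : ℕ) :
    ∑ v ∈ Icc 1 z, (v : ℝ) ^ c ≤ (1 + log z) * (z : ℝ) ^ max (c + 1) 0 := by
  calc _ ≤ ∑ v ∈ Icc 1 z, (v : ℝ)⁻¹ * (z : ℝ) ^ max (c + 1) 0 := by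
        refine sum_le_sum fun v hv => ?_
        obtain ⟨h1, hz⟩ := mem_Icc.1 hv
        have hv1 : (1 : ℝ) ≤ v := by exact_mod_cast h1
        have hv0 : (0 : ℝ) < v := by linarith
        calc (v : ℝ) ^ c = (v : ℝ)⁻¹ * (v : ℝ) ^ (c + 1) := by
              rw [rpow_add_one hv0.ne']; field_simp
          _ ≤ (v : ℝ)⁻¹ * (z : ℝ) ^ max (c + 1) 0 := by
              gcongr
              exact rpow_le_rpow_max_zero hv1 (by exact_mod_cast hz)
    _ = (∑ v ∈ Icc 1 z, (v : ℝ)⁻¹) * (z : ℝ) ^ max (c + 1) 0 := (sum_mul ..).symm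
    _ ≤ (1 + log z) * (z : ℝ) ^ max (c + 1) 0 := by
        gcongr
        exact sum_Icc_inv_le_one_add_log z

lemma le_mul_or_exists_le_mul_of_sum_add_eq {t y z : ℕ} (x : Fin t → ℕ)
    (h : ∑ i, x i + y = z) :
    z ≤ (t + 1) * y ∨ ∃ j, z ≤ (t + 1) * x j := by
  by_contra! hlt
  have hsum : ∑ i, (t + 1) * x i ≤ t * z := by
    simpa using sum_le_sum fun i (_ : i ∈ univ) => (hlt.2 i).le
  have : (t + 1) * z < (t + 1) * z := by
    calc (t + 1) * z = ∑ i, (t + 1) * x i + (t + 1) * y := by rw [← mul_sum, ← mul_add, h]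
      _ < t * z + z := by omega
      _ = (t + 1) * z := by ring
  exact this.false

lemma sum_le_sum_filter_add_sum_sum_filter {α ι : Type*} [Fintype ι] {R : Finset α}
    {W : α → ℝ} (hW : ∀ x ∈ R, 0 ≤ W x) (P : α → Prop) [DecidablePred P]
    (Q : ι → α → Prop) [∀ j, DecidablePred (Q j)]
    (hcover : ∀ x ∈ R, P x ∨ ∃ j, Q j x) :
    ∑ x ∈ R, W x ≤ ∑ x ∈ R with P x, W x + ∑ j, ∑ x ∈ R with Q j x, W x := by
  simp only [sum_filter]
  rw [sum_comm, ← sum_add_distrib]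
  refine sum_le_sum fun x hx => ?_
  have hite : ∀ (p : Prop) [Decidable p], 0 ≤ if p then W x else 0 := fun p _ => by
    split_ifs <;> simp [hW x hx]
  rcases hcover x hx with hP | ⟨j, hj⟩
  · have := sum_nonneg fun j (_ : j ∈ univ) => hite (Q j x)
    rw [if_pos hP]
    linarith
  · have := single_le_sum (fun j (_ : j ∈ univ) => hite (Q j x)) (mem_univ j)
    rw [if_pos hj] at this
    linarith [hite (P x)]

def tuplesSumLt (t z : ℕ) : Finset (Fin t → ℕ) :=
  (Fintype.piFinset fun _ : Fin t => Icc 1 z).filter fun x => ∑ i, x i < z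

lemma mem_tuplesSumLt {t z : ℕ} {x : Fin t → ℕ} :
    x ∈ tuplesSumLt t z ↔ (∀ i, x i ∈ Icc 1 z) ∧ ∑ i, x i < z := by
  simp [tuplesSumLt]

lemma sum_update_sub_sum_le {t z : ℕ} (j : Fin t) {R : Finset (Fin t → ℕ)}
    (hR : R ⊆ tuplesSumLt t z) {G : (Fin t → ℕ) → ℝ} (hG : ∀ q, 0 ≤ G q) :
    ∑ x ∈ R, G (Function.update x j (z - ∑ i, x i)) ≤
      ∑ q ∈ Fintype.piFinset (fun _ : Fin t => Icc 1 z), G q := by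
  have hsum : ∀ x : Fin t → ℕ, ∑ i, Function.update x j (z - ∑ i, x i) i =
      z - ∑ i, x i + ∑ i ∈ univ \ {j}, x i := fun x => sum_update_of_mem (mem_univ j) _ _
  -- The coordinates of the image sum to `z - x j`, so the same map recovers `x`.
  have hleft : Set.LeftInvOn (fun q => Function.update q j (z - ∑ i, q i))
      (fun x => Function.update x j (z - ∑ i, x i)) R := by
    intro x hx
    have hlt := (mem_tuplesSumLt.1 (hR hx)).2
    have hsplit := sum_eq_add_sum_sdiff_singleton_of_mem (mem_univ j) x
    simp only [hsum, Function.update_idem]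
    convert Function.update_eq_self j x using 2
    omega
  rw [← sum_image hleft.injOn]
  refine sum_le_sum_of_subset_of_nonneg (fun q hq => ?_) fun q _ _ => hG q
  obtain ⟨x, hx, rfl⟩ := mem_image.1 hq
  have ⟨hxI, hlt⟩ := mem_tuplesSumLt.1 (hR hx)
  refine Fintype.mem_piFinset.2 fun i => ?_
  rcases eq_or_ne i j with rfl | hij
  · simp only [Function.update_self, mem_Icc]; omega
  · simpa [Function.update_of_ne hij] using hxI i

section Weight

variable {t z : ℕ} {a e : ℝ}

noncomputable def weight (a e : ℝ) (z : ℕ) (x : Fin t → ℕ) : ℝ :=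
  (∏ i, (x i : ℝ) ^ a) * ((z : ℝ) - ∑ i, (x i : ℝ)) ^ e

lemma weight_eq_of_mem {x : Fin t → ℕ} (hx : x ∈ tuplesSumLt t z) :
    weight a e z x = (∏ i, (x i : ℝ) ^ a) * (((z - ∑ i, x i : ℕ) : ℝ)) ^ e := by
  rw [weight, Nat.cast_sub (mem_tuplesSumLt.1 hx).2.le, Nat.cast_sum]

lemma weight_nonneg_of_mem {x : Fin t → ℕ} (hx : x ∈ tuplesSumLt t z) :
    0 ≤ weight a e z x := by
  rw [weight_eq_of_mem hx]
  positivity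

lemma sum_weight_filter_le_of_le_mul_sub {A : ℝ} (he : e ≤ 0) (hz : 0 < z)
    (hA : ∑ v ∈ Icc 1 z, (v : ℝ) ^ a ≤ A) :
    ∑ x ∈ tuplesSumLt t z with z ≤ (t + 1) * (z - ∑ i, x i), weight a e z x ≤
      ((t : ℝ) + 1) ^ (-e) * (z : ℝ) ^ e * A ^ t := by
  calc _ ≤ ∑ x ∈ tuplesSumLt t z with z ≤ (t + 1) * (z - ∑ i, x i),
          ((t : ℝ) + 1) ^ (-e) * (z : ℝ) ^ e * ∏ i, (x i : ℝ) ^ a := by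
        refine sum_le_sum fun x hx => ?_
        obtain ⟨hxR, hlarge⟩ := mem_filter.1 hx
        have hY := Real.rpow_le_mul_rpow_of_le_mul (x := ((z - ∑ i, x i : ℕ) : ℝ)) (y := z)
          (m := (t : ℝ) + 1) (c := e) (by exact_mod_cast hz)
          (by positivity) (by exact_mod_cast hlarge) he
        rw [weight_eq_of_mem hxR, mul_comm]
        gcongr
    _ ≤ ∑ x ∈ Fintype.piFinset (fun _ : Fin t => Icc 1 z),
          ((t : ℝ) + 1) ^ (-e) * (z : ℝ) ^ e * ∏ i, (x i : ℝ) ^ a :=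
        sum_le_sum_of_subset_of_nonneg (filter_subset _ _ |>.trans (filter_subset _ _))
          fun _ _ _ => by positivity
    _ = ((t : ℝ) + 1) ^ (-e) * (z : ℝ) ^ e * (∑ v ∈ Icc 1 z, (v : ℝ) ^ a) ^ t := by
        rw [← mul_sum, sum_prod_piFinset (Icc 1 z) fun _ v => (v : ℝ) ^ a, prod_const,
          card_univ, Fintype.card_fin]
    _ ≤ _ := by gcongr

lemma sum_piFinset_prod_rpow_update_le {A B : ℝ} (hA : ∑ v ∈ Icc 1 z, (v : ℝ) ^ a ≤ A)
    (hB : ∑ v ∈ Icc 1 z, (v : ℝ) ^ e ≤ B) (j : Fin t) :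
    ∑ q ∈ Fintype.piFinset (fun _ : Fin t => Icc 1 z),
        ∏ i, (q i : ℝ) ^ Function.update (fun _ => a) j e i ≤ B * A ^ (t - 1) := by
  rw [sum_prod_piFinset (Icc 1 z) fun i v => (v : ℝ) ^ Function.update (fun _ => a) j e i]
  calc _ ≤ ∏ i, Function.update (fun _ => A) j B i := by
        gcongr with i
        rcases eq_or_ne i j with rfl | hij <;> simp [*]
    _ = B * A ^ (t - 1) := by
        rw [prod_update_of_mem (mem_univ j), prod_const, card_univ_sdiff, card_singleton,
          Fintype.card_fin]

lemma weight_le_mul_prod_rpow_update (ha : a ≤ 0) (hz : 0 < z) {x : Fin t → ℕ}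
    (hx : x ∈ tuplesSumLt t z) {j : Fin t} (hlarge : z ≤ (t + 1) * x j) :
    weight a e z x ≤ ((t : ℝ) + 1) ^ (-a) * (z : ℝ) ^ a *
        ∏ i, (Function.update x j (z - ∑ i, x i) i : ℝ) ^
          Function.update (fun _ => a) j e i := by
  have hxj := Real.rpow_le_mul_rpow_of_le_mul (x := (x j : ℝ)) (y := z) (m := (t : ℝ) + 1)
    (c := a) (by exact_mod_cast hz) (by positivity) (by exact_mod_cast hlarge) ha
  have hupdate : ∀ i, (Function.update x j (z - ∑ i, x i) i : ℝ) ^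
      Function.update (fun _ => a) j e i =
        Function.update (fun i => (x i : ℝ) ^ a) j (((z - ∑ i, x i : ℕ) : ℝ) ^ e) i := by
    intro i
    rcases eq_or_ne i j with rfl | hij <;> simp [*]
  simp only [hupdate]
  rw [prod_update_of_mem (mem_univ j), weight_eq_of_mem hx,
    prod_eq_mul_prod_sdiff_singleton_of_mem (mem_univ j)]
  calc _ ≤ ((t : ℝ) + 1) ^ (-a) * (z : ℝ) ^ a * (∏ i ∈ univ \ {j}, (x i : ℝ) ^ a) *
          ((z - ∑ i, x i : ℕ) : ℝ) ^ e := by gcongr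
    _ = _ := by ring

lemma sum_weight_filter_le_of_le_mul_apply {A B : ℝ} (ha : a ≤ 0) (hz : 0 < z)
    (hA : ∑ v ∈ Icc 1 z, (v : ℝ) ^ a ≤ A) (hB : ∑ v ∈ Icc 1 z, (v : ℝ) ^ e ≤ B)
    (j : Fin t) :
    ∑ x ∈ tuplesSumLt t z with z ≤ (t + 1) * x j, weight a e z x ≤
      ((t : ℝ) + 1) ^ (-a) * (z : ℝ) ^ a * (B * A ^ (t - 1)) := by
  set G : (Fin t → ℕ) → ℝ := fun q =>
    ∏ i, (q i : ℝ) ^ Function.update (fun _ => a) j e i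
  calc _ ≤ ∑ x ∈ tuplesSumLt t z with z ≤ (t + 1) * x j,
          ((t : ℝ) + 1) ^ (-a) * (z : ℝ) ^ a * G (Function.update x j (z - ∑ i, x i)) :=
        sum_le_sum fun x hx => weight_le_mul_prod_rpow_update ha hz (mem_filter.1 hx).1
          (mem_filter.1 hx).2
    _ = ((t : ℝ) + 1) ^ (-a) * (z : ℝ) ^ a *
          ∑ x ∈ tuplesSumLt t z with z ≤ (t + 1) * x j,
            G (Function.update x j (z - ∑ i, x i)) :=
        (mul_sum ..).symm
    _ ≤ ((t : ℝ) + 1) ^ (-a) * (z : ℝ) ^ a *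
          ∑ q ∈ Fintype.piFinset (fun _ : Fin t => Icc 1 z), G q := by
        gcongr
        exact sum_update_sub_sum_le j (filter_subset _ _) fun q => by positivity
    _ ≤ _ := by
        gcongr
        exact sum_piFinset_prod_rpow_update_le hA hB j

lemma sum_weight_le {A B : ℝ} (ha : a ≤ 0) (he : e ≤ 0) (hz : 0 < z)
    (hA : ∑ v ∈ Icc 1 z, (v : ℝ) ^ a ≤ A) (hB : ∑ v ∈ Icc 1 z, (v : ℝ) ^ e ≤ B) :
    ∑ x ∈ tuplesSumLt t z, weight a e z x ≤
      ((t : ℝ) + 1) ^ (-e) * (z : ℝ) ^ e * A ^ t +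
        t * (((t : ℝ) + 1) ^ (-a) * (z : ℝ) ^ a * (B * A ^ (t - 1))) := by
  have hcover : ∀ x ∈ tuplesSumLt t z,
      z ≤ (t + 1) * (z - ∑ i, x i) ∨ ∃ j, z ≤ (t + 1) * x j := fun x hx =>
    le_mul_or_exists_le_mul_of_sum_add_eq x (Nat.add_sub_cancel' (mem_tuplesSumLt.1 hx).2.le)
  calc _ ≤ _ := sum_le_sum_filter_add_sum_sum_filter (fun x hx => weight_nonneg_of_mem hx) _ _
        hcover
    _ ≤ _ := by
        gcongr
        · exact sum_weight_filter_le_of_le_mul_sub he hz hA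
        · refine (sum_le_sum fun j _ =>
            sum_weight_filter_le_of_le_mul_apply ha hz hA hB j).trans_eq ?_
          simp

end Weight

section Exponents

variable {s z : ℝ} {t : ℕ}

lemma rpow_neg_neg_two_mul_div_mul_le (ht : 1 ≤ t) (hts : t + 1 ≤ s) (hz : 1 ≤ z) :
    ((t : ℝ) + 1) ^ (-(-(2 * t) / s)) * z ^ (-(2 * t) / s) * (s * z ^ (1 / s)) ^ t ≤
      s ^ (t + 2) * z ^ (-1 / s) := by
  have hs : 0 < s := by linarith [(t.cast_nonneg : (0 : ℝ) ≤ t)]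
  have ht1 : (1 : ℝ) ≤ t := by exact_mod_cast ht
  have hconst : ((t : ℝ) + 1) ^ (-(-(2 * t) / s)) ≤ s ^ 2 := by
    calc ((t : ℝ) + 1) ^ (-(-(2 * t) / s)) ≤ ((t : ℝ) + 1) ^ (2 : ℝ) := by
          refine rpow_le_rpow_of_exponent_le (by linarith) ?_
          rw [neg_div, neg_neg, div_le_iff₀ hs]
          linarith
      _ ≤ s ^ 2 := by rw [rpow_two]; gcongr
  have hexp : -(2 * t) / s + t * (1 / s) ≤ -1 / s := by
    rw [show -(2 * t) / s + t * (1 / s) = -t / s by ring]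
    exact div_le_div_of_nonneg_right (by linarith) hs.le
  calc _ = ((t : ℝ) + 1) ^ (-(-(2 * t) / s)) * s ^ t * z ^ (-(2 * t) / s + t * (1 / s)) := by
        rw [mul_rpow_pow (by linarith), rpow_add (by linarith)]; ring
    _ ≤ s ^ 2 * s ^ t * z ^ (-1 / s) := by gcongr
    _ = s ^ (t + 2) * z ^ (-1 / s) := by ring

lemma rpow_neg_neg_one_add_inv_mul_le {L : ℝ} (hL : 0 ≤ L) (ht : 1 ≤ t) (hts : t + 1 ≤ s)
    (hz : 1 ≤ z) :
    ((t : ℝ) + 1) ^ (-(-1 + 1 / s)) * z ^ (-1 + 1 / s) *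
        (L * z ^ max (-(2 * t) / s + 1) 0 * (s * z ^ (1 / s)) ^ (t - 1)) ≤
      s ^ t * L * z ^ (-1 / s) := by
  have hs : 0 < s := by linarith [(t.cast_nonneg : (0 : ℝ) ≤ t)]
  have ht1 : (1 : ℝ) ≤ t := by exact_mod_cast ht
  have hconst : ((t : ℝ) + 1) ^ (-(-1 + 1 / s)) ≤ s := by
    calc ((t : ℝ) + 1) ^ (-(-1 + 1 / s)) ≤ ((t : ℝ) + 1) ^ (1 : ℝ) := by
          refine rpow_le_rpow_of_exponent_le (by linarith) ?_
          linarith [one_div_pos.2 hs]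
      _ ≤ s := by rwa [rpow_one]
  have hexp :
      -1 + 1 / s + max (-(2 * t) / s + 1) 0 + ((t - 1 : ℕ) : ℝ) * (1 / s) ≤ -1 / s := by
    rw [Nat.cast_sub ht, Nat.cast_one]
    have key : max (-(2 * t) / s + 1) 0 ≤ 1 - (t + 1) / s := by
      refine max_le ?_ ?_
      · rw [neg_div, ← sub_eq_neg_add, sub_le_sub_iff_left]
        exact div_le_div_of_nonneg_right (by linarith) hs.le
      · rwa [sub_nonneg, div_le_one hs]
    have e : -1 + 1 / s + (1 - (t + 1) / s) + ((t : ℝ) - 1) * (1 / s) = -1 / s := by ring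
    linarith
  have hst : s * s ^ (t - 1) = s ^ t := by rw [← pow_succ', Nat.sub_add_cancel ht]
  calc _ = ((t : ℝ) + 1) ^ (-(-1 + 1 / s)) * s ^ (t - 1) * L *
          z ^ (-1 + 1 / s + max (-(2 * t) / s + 1) 0 + ((t - 1 : ℕ) : ℝ) * (1 / s)) := by
        have hz0 : 0 < z := by linarith
        rw [mul_rpow_pow hz0.le, rpow_add hz0 (-1 + 1 / s + _), rpow_add hz0 (-1 + 1 / s)]
        ring
    _ ≤ s * s ^ (t - 1) * L * z ^ (-1 / s) := by gcongr
    _ = s ^ t * L * z ^ (-1 / s) := by rw [hst]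

lemma sum_weight_le_mul_rpow_neg_inv {z : ℕ} (ht : 1 ≤ t) (hts : t + 1 ≤ s) (hz : 1 ≤ z) :
    ∑ x ∈ tuplesSumLt t z, weight (-1 + 1 / s) (-(2 * t) / s) z x ≤
      (s ^ (t + 2) + t * s ^ t * (1 + log z)) * (z : ℝ) ^ (-1 / s) := by
  have hs : 0 < s := by linarith [(t.cast_nonneg : (0 : ℝ) ≤ t)]
  have hz1 : (1 : ℝ) ≤ z := by exact_mod_cast hz
  have h1s : 1 / s ≤ 1 := by rw [div_le_one hs]; linarith [(t.cast_nonneg : (0 : ℝ) ≤ t)]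
  have hA : ∑ v ∈ Icc 1 z, (v : ℝ) ^ (-1 + 1 / s) ≤ s * (z : ℝ) ^ (1 / s) := by
    convert sum_Icc_rpow_le_rpow_add_one_div (a := -1 + 1 / s)
      (by linarith [one_div_pos.2 hs]) (by linarith) z using 1
    rw [neg_add_cancel_comm]
    field_simp
  have hsum := sum_weight_le (t := t) (e := -(2 * t) / s) (by linarith)
    (by rw [neg_div]; exact neg_nonpos.2 (by positivity)) hz hA
    (sum_Icc_rpow_le_one_add_log_mul _ z)
  have hT1 := rpow_neg_neg_two_mul_div_mul_le ht hts hz1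
  have hT2 := mul_le_mul_of_nonneg_left
    (rpow_neg_neg_one_add_inv_mul_le (by positivity : 0 ≤ 1 + log z) ht hts hz1) t.cast_nonneg
  linarith

end Exponents

/-- Lemma 1 (ii): for `1 ≤ t ≤ s-1`, the sum over tuples of positive integers with
`x_1 + ⋯ + x_t < z` of `(x_1 ⋯ x_t)^{-1+1/s} (z - (x_1 + ⋯ + x_t))^{-2t/s}` is
`≪ z^{-1/s} log z`, with an implied constant depending only on `s`. -/
theorem stmt_5 (s : ℕ) (hs : 2 ≤ s) :
    ∃ C : ℝ, 0 < C ∧ ∀ t : ℕ, 1 ≤ t → t ≤ s - 1 → ∀ z : ℕ, 2 ≤ z →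
      ∑ x ∈ (Fintype.piFinset fun _ : Fin t => Finset.Icc 1 z).filter
          (fun x : Fin t → ℕ => ∑ i, x i < z),
        (∏ i, (x i : ℝ) ^ (-1 + 1 / (s : ℝ))) *
          ((z : ℝ) - ∑ i, (x i : ℝ)) ^ (-(2 * (t : ℝ)) / s) ≤
      C * (z : ℝ) ^ (-(1 : ℝ) / s) * Real.log z := by
  refine ⟨5 * (s : ℝ) ^ (s + 2), by positivity, fun t ht hts z hz => ?_⟩
  have hbound := sum_weight_le_mul_rpow_neg_inv (s := s) ht
    (by exact_mod_cast (by omega : t + 1 ≤ s)) (by omega : 1 ≤ z)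
  have hlog : 1 / 2 ≤ log z := by
    linarith [log_two_gt_d9, log_le_log two_pos (by exact_mod_cast hz : (2 : ℝ) ≤ z)]
  have hK1 : (s : ℝ) ^ (t + 2) ≤ s ^ (s + 2) :=
    pow_le_pow_right₀ (by exact_mod_cast (by omega : 1 ≤ s)) (by omega)
  have hK2 : (t : ℝ) * s ^ t ≤ s ^ (s + 2) := by
    have : t * s ^ t ≤ s * s ^ (s + 1) :=
      Nat.mul_le_mul (by omega) (Nat.pow_le_pow_right (by omega) (by omega))
    rw [← pow_succ'] at this
    exact_mod_cast this
  have hK : (s : ℝ) ^ (t + 2) + t * s ^ t * (1 + log z) ≤ s ^ (s + 2) * (2 + log z) := by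
    nlinarith
  calc _ = ∑ x ∈ tuplesSumLt t z, weight (-1 + 1 / (s : ℝ)) (-(2 * (t : ℝ)) / s) z x := rfl
    _ ≤ s ^ (s + 2) * (2 + log z) * (z : ℝ) ^ (-(1 : ℝ) / s) :=
        hbound.trans (by gcongr)
    _ ≤ _ := by
        have : 0 ≤ (s : ℝ) ^ (s + 2) * (z : ℝ) ^ (-(1 : ℝ) / s) := by positivity
        nlinarith
end

section
/- Janson's first correlation inequality: let I be a finite set and let (ξ_i)_{i∈I} be independent random variables with values in {0,1} on a probability space. Let Ω be a finite family of nonempty subsets of I, and for ω ∈ Ω let E_ω be the event {ξ_i = 1 for all i ∈ ω}. Assume P(E_ω) ≤ 1/2 for every ω ∈ Ω. Then P(⋂_{ω∈Ω} E_ω^c) ≥ ∏_{ω∈Ω} P(E_ω^c). -/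
/-!
The events `E_ωᶜ` are decreasing in the configuration `(ξ_i)_i ∈ I → Bool`, and the law of an
independent configuration is a product measure, for which `μ a * μ b = μ (a ⊓ b) * μ (a ⊔ b)`
holds coordinatewise. So the FKG inequality applies: decreasing events are positively
correlated (Harris), and induction on `S` gives the claim.
-/

open MeasureTheory ProbabilityTheory Finset

section Correlation

variable {α β : Type*} [DistribLattice α] [Fintype α] [CommSemiring β] [LinearOrder β]
  [IsStrictOrderedRing β] [ExistsAddOfLE β] {μ f g : α → β}

theorem fkg_antitone (hμ₀ : 0 ≤ μ) (hf₀ : 0 ≤ f) (hg₀ : 0 ≤ g) (hf : Antitone f)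
    (hg : Antitone g) (hμ : ∀ a b, μ a * μ b ≤ μ (a ⊓ b) * μ (a ⊔ b)) :
    (∑ a, μ a * f a) * ∑ a, μ a * g a ≤ (∑ a, μ a) * ∑ a, μ a * (f a * g a) :=
  fkg (α := αᵒᵈ) f g μ hμ₀ hf₀ hg₀ hf.dual_left hg.dual_left fun a b ↦
    (hμ a b).trans_eq (mul_comm _ _)

theorem prod_sum_mul_le_sum_mul_prod_of_antitone {ι : Type*} (hμ₀ : 0 ≤ μ)
    (hμ : ∀ a b, μ a * μ b ≤ μ (a ⊓ b) * μ (a ⊔ b)) (hμ₁ : ∑ a, μ a = 1) (S : Finset ι)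
    {g : ι → α → β} (hg₀ : ∀ ω, 0 ≤ g ω) (hg : ∀ ω, Antitone (g ω)) :
    ∏ ω ∈ S, ∑ a, μ a * g ω a ≤ ∑ a, μ a * ∏ ω ∈ S, g ω a := by
  induction S using Finset.cons_induction with
  | empty => simp [hμ₁]
  | cons σ S hσ ih =>
    have hprod₀ : 0 ≤ fun a ↦ ∏ ω ∈ S, g ω a := fun a ↦ prod_nonneg fun ω _ ↦ hg₀ ω a
    have hprod : Antitone fun a ↦ ∏ ω ∈ S, g ω a := fun a b hab ↦
      prod_le_prod (fun ω _ ↦ hg₀ ω b) fun ω _ ↦ hg ω hab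
    simp only [prod_cons]
    calc (∑ a, μ a * g σ a) * ∏ ω ∈ S, ∑ a, μ a * g ω a
        ≤ (∑ a, μ a * g σ a) * ∑ a, μ a * ∏ ω ∈ S, g ω a :=
          mul_le_mul_of_nonneg_left ih <| sum_nonneg fun a _ ↦ mul_nonneg (hμ₀ a) (hg₀ σ a)
      _ ≤ ∑ a, μ a * (g σ a * ∏ ω ∈ S, g ω a) := by
          simpa [hμ₁] using fkg_antitone hμ₀ (hg₀ σ) hprod₀ (hg σ) hprod hμ

end Correlation

theorem IsLowerSet.antitone_indicator_const {α β : Type*} [Preorder α] [Preorder β] [Zero β]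
    {s : Set α} (hs : IsLowerSet s) {c : β} (hc : 0 ≤ c) : Antitone (s.indicator fun _ ↦ c) := by
  intro a b hab
  by_cases hb : b ∈ s
  · simp [hb, hs hab hb]
  · exact (Set.indicator_of_notMem hb _).trans_le (Set.indicator_nonneg (fun _ _ ↦ hc) a)

theorem isUpperSet_setOf_forall_eq_true {I : Type*} (ω : Finset I) :
    IsUpperSet {a : I → Bool | ∀ i ∈ ω, a i = true} := fun _ _ hab ha i hi ↦
  top_le_iff.mp ((ha i hi).symm.trans_le (hab i))

section Probability

variable {Ω : Type*} [MeasurableSpace Ω] {μ : Measure Ω}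

theorem measureReal_preimage_eq_sum_mul_indicator {α : Type*} [Fintype α] [MeasurableSpace α]
    [MeasurableSingletonClass α] [IsFiniteMeasure μ] {T : Ω → α} (hT : Measurable T)
    (B : Set α) : μ.real (T ⁻¹' B) = ∑ a, μ.real (T ⁻¹' {a}) * B.indicator 1 a := by
  classical
  simp only [Set.indicator_apply, Pi.one_apply, mul_ite, mul_one, mul_zero]
  rw [← sum_filter, Set.filter_mem_univ_eq_toFinset,
    sum_measureReal_preimage_singleton _ fun a _ ↦ hT (measurableSet_singleton a), Set.coe_toFinset]

namespace ProbabilityTheory.iIndepFun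

variable {I β : Type*} [Fintype I] [MeasurableSpace β] [MeasurableSingletonClass β]
  {ξ : I → Ω → β}

theorem measureReal_preimage_pi_singleton (hξ : iIndepFun ξ μ) (c : I → β) :
    μ.real ((fun x i ↦ ξ i x) ⁻¹' {c}) = ∏ i, μ.real (ξ i ⁻¹' {c i}) := by
  have hfiber : (fun x i ↦ ξ i x) ⁻¹' {c} = ⋂ i, ξ i ⁻¹' {c i} := by
    ext x
    simp [funext_iff]
  rw [measureReal_def, hfiber, hξ.meas_iInter fun i ↦ ⟨{c i}, measurableSet_singleton _, rfl⟩,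
    ENNReal.toReal_prod]
  rfl

theorem measureReal_preimage_pi_singleton_mul [LinearOrder β] (hξ : iIndepFun ξ μ)
    (a b : I → β) :
    μ.real ((fun x i ↦ ξ i x) ⁻¹' {a}) * μ.real ((fun x i ↦ ξ i x) ⁻¹' {b}) =
      μ.real ((fun x i ↦ ξ i x) ⁻¹' {a ⊓ b}) * μ.real ((fun x i ↦ ξ i x) ⁻¹' {a ⊔ b}) := by
  simp only [hξ.measureReal_preimage_pi_singleton, ← prod_mul_distrib]
  exact prod_congr rfl fun i _ ↦ (fn_min_mul_fn_max (fun c ↦ μ.real (ξ i ⁻¹' {c})) _ _).symm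

end ProbabilityTheory.iIndepFun

end Probability

theorem stmt_7_general (I : Type*) [Fintype I]
    (Ω : Type*) [MeasureSpace Ω] [IsProbabilityMeasure (ℙ : Measure Ω)]
    (ξ : I → Ω → Bool) (hmeas : ∀ i, Measurable (ξ i))
    (hindep : iIndepFun ξ ℙ)
    (S : Finset (Finset I)) :
    ∏ ω ∈ S, (ℙ ({x | ∀ i ∈ ω, ξ i x = true}ᶜ)).toReal ≤
      (ℙ (⋂ ω ∈ S, {x | ∀ i ∈ ω, ξ i x = true}ᶜ)).toReal := by
  classical
  let T : Ω → I → Bool := fun x i ↦ ξ i x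
  have hT : Measurable T := measurable_pi_lambda _ hmeas
  let E : Finset I → Set (I → Bool) := fun ω ↦ {a | ∀ i ∈ ω, a i = true}
  have hlaw := measureReal_preimage_eq_sum_mul_indicator (μ := ℙ) hT
  have hharris := prod_sum_mul_le_sum_mul_prod_of_antitone
    (μ := fun a ↦ (ℙ).real (T ⁻¹' {a})) (fun a ↦ measureReal_nonneg)
    (fun a b ↦ (hindep.measureReal_preimage_pi_singleton_mul a b).le)
    (by simpa using (hlaw Set.univ).symm) S (g := fun ω ↦ (E ω)ᶜ.indicator 1)
    (fun _ ↦ Set.indicator_nonneg fun _ _ ↦ zero_le_one)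
    (fun ω ↦ (isUpperSet_setOf_forall_eq_true ω).compl.antitone_indicator_const zero_le_one)
  simp only [← measureReal_def]
  calc ∏ ω ∈ S, (ℙ).real (T ⁻¹' (E ω)ᶜ)
        = ∏ ω ∈ S, ∑ a, (ℙ).real (T ⁻¹' {a}) * (E ω)ᶜ.indicator 1 a :=
          prod_congr rfl fun ω _ ↦ hlaw _
    _ ≤ ∑ a, (ℙ).real (T ⁻¹' {a}) * (⋂ ω ∈ S, (E ω)ᶜ).indicator 1 a := by
        simpa only [prod_indicator_apply, prod_const_one] using hharris
    _ = (ℙ).real (T ⁻¹' ⋂ ω ∈ S, (E ω)ᶜ) := (hlaw _).symm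
    _ = (ℙ).real (⋂ ω ∈ S, {x | ∀ i ∈ ω, ξ i x = true}ᶜ) := by
        simp only [Set.preimage_iInter]; rfl

/-- Janson's first correlation inequality: if `(ξ_i)_{i ∈ I}` are independent `{0,1}`-valued
random variables, `S` is a finite family of nonempty subsets of `I`, `E_ω = {ξ_i = 1, ∀ i ∈ ω}`
and `P(E_ω) ≤ 1/2` for each `ω ∈ S`, then `P(⋂_{ω ∈ S} E_ωᶜ) ≥ ∏_{ω ∈ S} P(E_ωᶜ)`. -/
theorem stmt_7 (I : Type*) [Fintype I] [DecidableEq I]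
    (Ω : Type*) [MeasureSpace Ω] [IsProbabilityMeasure (ℙ : Measure Ω)]
    (ξ : I → Ω → Bool) (hmeas : ∀ i, Measurable (ξ i))
    (hindep : iIndepFun ξ ℙ)
    (S : Finset (Finset I)) (hne : ∀ ω ∈ S, ω.Nonempty)
    (hhalf : ∀ ω ∈ S, (ℙ {x | ∀ i ∈ ω, ξ i x = true}).toReal ≤ 1 / 2) :
    ∏ ω ∈ S, (ℙ ({x | ∀ i ∈ ω, ξ i x = true}ᶜ)).toReal ≤
      (ℙ (⋂ ω ∈ S, {x | ∀ i ∈ ω, ξ i x = true}ᶜ)).toReal :=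
  stmt_7_general I Ω ξ hmeas hindep S
end
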